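/- arXiv:1311.5081 — 4 statements merged into one kernel-verified Lean document; each statement's English description precedes it below -/
import Mathlib

section
/- Fix vertices u and v. The set of values {D_{u,v}(f) : f ∈ ℝ} ⊆ ℕ∞ has cardinality at most k + 1, where k is the number of distinct edge-capacity values |{cap(e) : e ∈ E(G)}|. (In particular it has at most m + 1 elements, where m is the number of edges; this is the paper's observation that there are only O(m) maximal flows.) -/
open SimpleGraph

/-- The cost of a walk: the sum of the edge costs over its edges. -/
def walkCost {V : Type*} (cost : Sym2 V → ℕ) {G : SimpleGraph V}
    {u v : V} (p : G.Walk u v) : ℕ :=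
  (p.edges.map cost).sum

/-- `D G cost cap u v f` : the infimum (in `ℕ∞`) of the costs of walks from
`u` to `v` that accommodate flow `f` (`⊤` if no such walk exists). -/
noncomputable def D {V : Type*} (G : SimpleGraph V) (cost : Sym2 V → ℕ)
    (cap : Sym2 V → ℝ) (u v : V) (f : ℝ) : ℕ∞ :=
  ⨅ p : {p : G.Walk u v // ∀ e ∈ p.edges, f ≤ cap e}, (walkCost cost p.1 : ℕ∞)

/-!
`D_{u,v}(f)` only depends on which edges have capacity at least `f`. Hence every value
`D_{u,v}(f)` is either `D_{u,v}(c)` for the least capacity `c ≥ f`, or, when no capacity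
reaches `f`, the common value `D_{u,v}(f₀)` at any `f₀` exceeding all capacities.
-/

section

variable {V : Type*} (G : SimpleGraph V) (cost : Sym2 V → ℕ) (cap : Sym2 V → ℝ) (u v : V)

theorem D_congr_of_forall_le_cap_iff {f₁ f₂ : ℝ}
    (h : ∀ e ∈ G.edgeSet, f₁ ≤ cap e ↔ f₂ ≤ cap e) :
    D G cost cap u v f₁ = D G cost cap u v f₂ := by
  have hwalks : (fun p : G.Walk u v => ∀ e ∈ p.edges, f₁ ≤ cap e)
      = (fun p : G.Walk u v => ∀ e ∈ p.edges, f₂ ≤ cap e) :=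
    funext fun p => propext <| forall₂_congr fun e he => h e (p.edges_subset_edgeSet he)
  unfold D
  rw [hwalks]

theorem D_mem_insert_image_cap {f₀ : ℝ} (hf₀ : ∀ c ∈ cap '' G.edgeSet, c < f₀)
    (hfin : (cap '' G.edgeSet).Finite) (f : ℝ) :
    D G cost cap u v f ∈
      insert (D G cost cap u v f₀) (D G cost cap u v '' (cap '' G.edgeSet)) := by
  by_cases hreach : ∃ c ∈ cap '' G.edgeSet, f ≤ c
  · obtain ⟨c, ⟨hcS, hfc⟩, hmin⟩ :=
      Set.exists_min_image _ id (hfin.inter_of_left {c | f ≤ c}) hreach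
    refine Or.inr ⟨c, hcS, (D_congr_of_forall_le_cap_iff G cost cap u v fun e he => ?_).symm⟩
    exact ⟨fun hfe => hmin (cap e) ⟨Set.mem_image_of_mem cap he, hfe⟩, hfc.out.trans⟩
  · push Not at hreach
    refine Or.inl (D_congr_of_forall_le_cap_iff G cost cap u v fun e he => ?_)
    have hcS := Set.mem_image_of_mem cap he
    exact iff_of_false (hreach _ hcS).not_ge (hf₀ _ hcS).not_ge

end

/-- For fixed `u, v`, the set of values `{D_{u,v}(f) : f ∈ ℝ}` has at most
`k + 1` elements, where `k` is the number of distinct edge-capacity values;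
in particular at most `m + 1` elements, where `m` is the number of edges. -/
theorem D_range_card_le {V : Type*} [Fintype V] (G : SimpleGraph V)
    (cost : Sym2 V → ℕ) (cap : Sym2 V → ℝ) (u v : V) :
    {x : ℕ∞ | ∃ f : ℝ, x = D G cost cap u v f}.Finite ∧
    {x : ℕ∞ | ∃ f : ℝ, x = D G cost cap u v f}.ncard ≤ (cap '' G.edgeSet).ncard + 1 ∧
    {x : ℕ∞ | ∃ f : ℝ, x = D G cost cap u v f}.ncard ≤ G.edgeSet.ncard + 1 := by
  set S := cap '' G.edgeSet
  have hSfin : S.Finite := G.edgeSet.toFinite.image cap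
  obtain ⟨b, hb⟩ := hSfin.bddAbove
  set T := insert (D G cost cap u v (b + 1)) (D G cost cap u v '' S)
  have hsub : {x : ℕ∞ | ∃ f : ℝ, x = D G cost cap u v f} ⊆ T := by
    rintro _ ⟨f, rfl⟩
    exact D_mem_insert_image_cap G cost cap u v (fun c hc => (hb hc).trans_lt (lt_add_one b))
      hSfin f
  have hTfin : T.Finite := (hSfin.image _).insert _
  have hcard : {x : ℕ∞ | ∃ f : ℝ, x = D G cost cap u v f}.ncard ≤ S.ncard + 1 :=
    calc _ ≤ T.ncard := Set.ncard_le_ncard hsub hTfin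
      _ ≤ (D G cost cap u v '' S).ncard + 1 := Set.ncard_insert_le _ _
      _ ≤ S.ncard + 1 := Nat.succ_le_succ (Set.ncard_image_le hSfin)
  have hSm : S.ncard ≤ G.edgeSet.ncard := Set.ncard_image_le G.edgeSet.toFinite
  exact ⟨hTfin.subset hsub, hcard, hcard.trans (Nat.succ_le_succ hSm)⟩
end

section
/- Fix vertices u ≠ v and let A_{u,v} = {(cost(p), bottleneck(p)) : p a walk from u to v with at least one edge} ⊆ ℕ × ℝ. Then the Pareto frontier P(A_{u,v}) is finite and |P(A_{u,v})| ≤ |{cap(e) : e ∈ E(G)}| ≤ m, where m is the number of edges of G. (There are at most m useful (d, f) pairs per destination vertex.) -/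
/-!
Two points of a Pareto frontier with the same second coordinate coincide, since the one
of smaller cost would dominate the other. The bottleneck of a walk is the capacity of one
of its edges, so the frontier injects into the set of edge capacities via `Prod.snd`.
-/

open SimpleGraph

/-- The bottleneck of a walk (with at least one edge): the minimum capacity
over its edges. -/
noncomputable def bottleneck {V : Type*} (cap : Sym2 V → ℝ) {G : SimpleGraph V}
    {u v : V} (p : G.Walk u v) : ℝ :=
  ((p.edges.map cap).min?).getD 0

/-- The Pareto frontier of a set of (distance, flow) pairs: the pairs that are
not dominated by any other pair of the set, where `(d', f')` dominates `(d, f)`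
if `(d', f') ≠ (d, f)`, `d' ≤ d` and `f' ≥ f`. -/
def Pareto (A : Set (ℕ × ℝ)) : Set (ℕ × ℝ) :=
  {x | x ∈ A ∧ ¬ ∃ y ∈ A, y ≠ x ∧ y.1 ≤ x.1 ∧ x.2 ≤ y.2}

/-- The set of (cost, bottleneck) pairs over all walks from `u` to `v` with at
least one edge. -/
def Auv {V : Type*} (G : SimpleGraph V) (cost : Sym2 V → ℕ) (cap : Sym2 V → ℝ)
    (u v : V) : Set (ℕ × ℝ) :=
  {x | ∃ p : G.Walk u v, p.edges ≠ [] ∧ x = (walkCost cost p, bottleneck cap p)}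

lemma Pareto_subset (A : Set (ℕ × ℝ)) : Pareto A ⊆ A :=
  fun _ hx => hx.1

lemma injOn_snd_Pareto (A : Set (ℕ × ℝ)) : Set.InjOn Prod.snd (Pareto A) := by
  rintro ⟨d, f⟩ ⟨hd, hnd⟩ ⟨d', f'⟩ ⟨hd', hnd'⟩ (rfl : f = f')
  rcases lt_trichotomy d d' with hlt | rfl | hlt
  · exact absurd ⟨(d, f), hd, by simp [hlt.ne], hlt.le, le_rfl⟩ hnd'
  · rfl
  · exact absurd ⟨(d', f), hd', by simp [hlt.ne], hlt.le, le_rfl⟩ hnd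

lemma exists_mem_edges_bottleneck_eq {V : Type*} (cap : Sym2 V → ℝ) {G : SimpleGraph V}
    {u v : V} (p : G.Walk u v) (hp : p.edges ≠ []) :
    ∃ e ∈ p.edges, bottleneck cap p = cap e := by
  obtain ⟨b, hb⟩ := Option.ne_none_iff_exists'.mp
    ((List.min?_eq_none_iff (xs := p.edges.map cap)).not.mpr (List.map_eq_nil_iff.not.mpr hp))
  obtain ⟨e, he, rfl⟩ := List.mem_map.mp (List.min?_mem hb)
  exact ⟨e, he, by simp [bottleneck, hb]⟩

lemma mapsTo_snd_Auv {V : Type*} (G : SimpleGraph V) (cost : Sym2 V → ℕ) (cap : Sym2 V → ℝ)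
    (u v : V) : Set.MapsTo Prod.snd (Auv G cost cap u v) (cap '' G.edgeSet) := by
  rintro _ ⟨p, hp, rfl⟩
  obtain ⟨e, he, hbe⟩ := exists_mem_edges_bottleneck_eq cap p hp
  exact ⟨e, p.edges_subset_edgeSet he, hbe.symm⟩

theorem Pareto_Auv_card_le_general {V : Type*} [Fintype V] (G : SimpleGraph V)
    (cost : Sym2 V → ℕ) (cap : Sym2 V → ℝ) {u v : V} :
    (Pareto (Auv G cost cap u v)).Finite ∧
    (Pareto (Auv G cost cap u v)).ncard ≤ (cap '' G.edgeSet).ncard ∧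
    (cap '' G.edgeSet).ncard ≤ G.edgeSet.ncard := by
  have hE : G.edgeSet.Finite := Set.toFinite _
  have hmaps : Set.MapsTo Prod.snd (Pareto (Auv G cost cap u v)) (cap '' G.edgeSet) :=
    (mapsTo_snd_Auv G cost cap u v).mono_left (Pareto_subset _)
  have hinj := injOn_snd_Pareto (Auv G cost cap u v)
  exact ⟨.of_injOn hmaps hinj (hE.image cap),
    Set.ncard_le_ncard_of_injOn _ hmaps hinj (hE.image cap), Set.ncard_image_le hE⟩

/-- For `u ≠ v`, the Pareto frontier of the (cost, bottleneck) pairs of walks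
from `u` to `v` is finite, of size at most the number of distinct edge
capacities, which is at most the number `m` of edges. -/
theorem Pareto_Auv_card_le {V : Type*} [Fintype V] (G : SimpleGraph V)
    (cost : Sym2 V → ℕ) (cap : Sym2 V → ℝ) {u v : V} (huv : u ≠ v) :
    (Pareto (Auv G cost cap u v)).Finite ∧
    (Pareto (Auv G cost cap u v)).ncard ≤ (cap '' G.edgeSet).ncard ∧
    (cap '' G.edgeSet).ncard ≤ G.edgeSet.ncard :=
  Pareto_Auv_card_le_general G cost cap
end

section
/- Suppose every edge of G has cost 1 (unit edge costs) and let n = |V|. Fix vertices u ≠ v and let A_{u,v} = {(length(p), bottleneck(p)) : p a walk from u to v with at least one edge} ⊆ ℕ × ℝ. Then |P(A_{u,v})| ≤ n − 1. (Even with m maximal flows, for unit edge costs the set S[v] of useful pairs has size O(n) for each destination vertex v.) -/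
open SimpleGraph

/-!
The bypass of a walk is a path whose edges are among those of the walk, so it is no longer
and has at least the same bottleneck. Hence every non-dominated pair is realised by a path,
whose length lies in `[1, n - 1]`. Two non-dominated pairs with the same length have comparable
bottlenecks, so one dominates the other unless they coincide: the frontier injects into
`[1, n - 1]` by its first coordinate.
-/

namespace Pareto

variable {A : Set (ℕ × ℝ)} {x y : ℕ × ℝ}

theorem eq_of_le (hx : x ∈ Pareto A) (hy : y ∈ A) (h₁ : y.1 ≤ x.1) (h₂ : x.2 ≤ y.2) :
    y = x :=
  by_contra fun hne => hx.2 ⟨y, hy, hne, h₁, h₂⟩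

theorem injOn_fst (A : Set (ℕ × ℝ)) : Set.InjOn Prod.fst (Pareto A) := by
  intro x hx y hy hxy
  rcases le_total x.2 y.2 with h | h
  · exact (eq_of_le hx hy.1 hxy.ge h).symm
  · exact eq_of_le hy hx.1 hxy.le h

theorem finite_and_ncard_le {s : Finset ℕ} (h : ∀ x ∈ Pareto A, x.1 ∈ s) :
    (Pareto A).Finite ∧ (Pareto A).ncard ≤ s.card := by
  have himage : Prod.fst '' Pareto A ⊆ s := Set.image_subset_iff.mpr h
  refine ⟨(s.finite_toSet.subset himage).of_finite_image (injOn_fst A), ?_⟩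
  simpa using Set.ncard_le_ncard_of_injOn Prod.fst h (injOn_fst A) s.finite_toSet

end Pareto

section Bottleneck

variable {V : Type*} (cap : Sym2 V → ℝ) {G : SimpleGraph V}

theorem bottleneck_le_cap {u v : V} {p : G.Walk u v} {e : Sym2 V} (he : e ∈ p.edges) :
    bottleneck cap p ≤ cap e := by
  have hmem : cap e ∈ p.edges.map cap := List.mem_map_of_mem he
  obtain ⟨m, hm⟩ := Option.isSome_iff_exists.mp (List.isSome_min?_of_mem hmem)
  rw [bottleneck, hm]
  exact (List.min?_eq_some_iff.mp hm).2 _ hmem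

theorem exists_cap_eq_bottleneck {u v : V} {p : G.Walk u v} (hp : p.edges ≠ []) :
    ∃ e ∈ p.edges, cap e = bottleneck cap p := by
  cases hm : (p.edges.map cap).min? with
  | none => simp_all [List.min?_eq_none_iff]
  | some m =>
    obtain ⟨e, he, rfl⟩ := List.mem_map.mp (List.min?_mem hm)
    exact ⟨e, he, by rw [bottleneck, hm, Option.getD_some]⟩

theorem bottleneck_le_of_edges_subset {u v u' v' : V} {p : G.Walk u v} {q : G.Walk u' v'}
    (hq : q.edges ≠ []) (h : q.edges ⊆ p.edges) : bottleneck cap p ≤ bottleneck cap q := by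
  obtain ⟨e, he, hcap⟩ := exists_cap_eq_bottleneck cap hq
  exact hcap ▸ bottleneck_le_cap cap (h he)

end Bottleneck

theorem fst_mem_Icc_of_mem_Pareto {V : Type*} [Fintype V] {G : SimpleGraph V}
    {cap : Sym2 V → ℝ} {u v : V} (huv : u ≠ v) {x : ℕ × ℝ}
    (hx : x ∈ Pareto {x : ℕ × ℝ | ∃ p : G.Walk u v, p.edges ≠ [] ∧
        x = (p.length, bottleneck cap p)}) :
    x.1 ∈ Finset.Icc 1 (Fintype.card V - 1) := by
  classical
  obtain ⟨p, -, rfl⟩ := hx.1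
  have hq : p.bypass.edges ≠ [] := Walk.edges_eq_nil.not.mpr (Walk.not_nil_of_ne huv)
  have hdom := Pareto.eq_of_le hx ⟨p.bypass, hq, rfl⟩ p.length_bypass_le_length
    (bottleneck_le_of_edges_subset cap hq p.edges_bypass_subset_edges)
  have hpos : 0 < p.bypass.length := Walk.not_nil_iff_lt_length.mp (Walk.not_nil_of_ne huv)
  have hlt : p.bypass.length < Fintype.card V := p.bypass_isPath.length_lt
  rw [← congrArg Prod.fst hdom, Finset.mem_Icc]
  omega

/-- With unit edge costs (cost of a walk = its length) and `u ≠ v`, the Pareto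
frontier of the (length, bottleneck) pairs of walks from `u` to `v` has at most
`n - 1` elements, where `n = |V|`. -/
theorem Pareto_unit_card_le {V : Type*} [Fintype V] (G : SimpleGraph V)
    (cap : Sym2 V → ℝ) {u v : V} (huv : u ≠ v) :
    (Pareto {x : ℕ × ℝ | ∃ p : G.Walk u v, p.edges ≠ [] ∧
        x = (p.length, bottleneck cap p)}).Finite ∧
    (Pareto {x : ℕ × ℝ | ∃ p : G.Walk u v, p.edges ≠ [] ∧
        x = (p.length, bottleneck cap p)}).ncard ≤ Fintype.card V - 1 := by
  simpa using Pareto.finite_and_ncard_le fun x hx => fst_mem_Icc_of_mem_Pareto huv hx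
end

section
/- Fix vertices u ≠ v and a real number f. Let C_f = {cap(e) : e ∈ E(G), f ≤ cap(e)} be the set of capacity values at least f. If C_f is nonempty then D_{u,v}(f) = D_{u,v}(min C_f); if C_f is empty then D_{u,v}(f) = ⊤. (Hence to solve the shortest paths for all flows problem it suffices to solve the shortest paths problem once for each of the at most m distinct capacity values, the 'maximal flows'.) -/
open SimpleGraph

/-!
No capacity lies in `[f, c)` for `c` the least capacity at least `f`, so the flows `f` and `c`
are accommodated by the same edges, hence by the same walks. If no edge accommodates `f`, no walk
from `u` to `v ≠ u` does, as such a walk has an edge.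
-/

lemma le_iff_sInf_image_le {α : Type*} {s : Set α} {c : α → ℝ} {f : ℝ}
    (hne : (c '' {x ∈ s | f ≤ c x}).Nonempty) {x : α} (hx : x ∈ s) :
    f ≤ c x ↔ sInf (c '' {x ∈ s | f ≤ c x}) ≤ c x := by
  have hf : f ∈ lowerBounds (c '' {x ∈ s | f ≤ c x}) := by
    rintro _ ⟨y, ⟨-, hy⟩, rfl⟩
    exact hy
  exact ⟨fun h => csInf_le ⟨f, hf⟩ ⟨x, ⟨hx, h⟩, rfl⟩, fun h => (le_csInf hne hf).trans h⟩

section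

variable {V : Type*} {G : SimpleGraph V} {cost : Sym2 V → ℕ} {cap : Sym2 V → ℝ} {u v : V}

lemma D_congr_flow {f g : ℝ} (h : ∀ e ∈ G.edgeSet, f ≤ cap e ↔ g ≤ cap e) :
    D G cost cap u v f = D G cost cap u v g :=
  (Equiv.subtypeEquivRight fun p : G.Walk u v =>
    forall₂_congr fun e he => h e (p.edges_subset_edgeSet he)).iInf_congr fun _ => rfl

lemma D_eq_top_of_forall_cap_lt (huv : u ≠ v) {f : ℝ} (h : ∀ e ∈ G.edgeSet, cap e < f) :
    D G cost cap u v f = ⊤ := by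
  refine iInf_eq_top.mpr fun ⟨p, hp⟩ => ?_
  obtain ⟨e, he⟩ := List.exists_mem_of_ne_nil p.edges
    (mt Walk.edges_eq_nil.mp (Walk.not_nil_of_ne huv))
  exact absurd (hp e he) (not_le.mpr (h e (p.edges_subset_edgeSet he)))

end

theorem D_eq_D_min_cap_general {V : Type*} (G : SimpleGraph V)
    (cost : Sym2 V → ℕ) (cap : Sym2 V → ℝ) {u v : V} (huv : u ≠ v) (f : ℝ) :
    ((cap '' {e ∈ G.edgeSet | f ≤ cap e}).Nonempty →
      D G cost cap u v f = D G cost cap u v (sInf (cap '' {e ∈ G.edgeSet | f ≤ cap e}))) ∧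
    (cap '' {e ∈ G.edgeSet | f ≤ cap e} = ∅ → D G cost cap u v f = ⊤) := by
  refine ⟨fun hne => D_congr_flow fun e he => le_iff_sInf_image_le hne he, fun hempty => ?_⟩
  refine D_eq_top_of_forall_cap_lt huv fun e he => not_le.mp fun hfe => ?_
  exact (Set.image_eq_empty.mp hempty).subset ⟨he, hfe⟩

/-- Let `C_f` be the set of capacity values at least `f`. If `C_f` is nonempty
then the shortest distance for flow `f` equals that for flow `min C_f`
(the least such capacity value); if `C_f` is empty then it is `⊤`. -/
theorem D_eq_D_min_cap {V : Type*} [Fintype V] (G : SimpleGraph V)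
    (cost : Sym2 V → ℕ) (cap : Sym2 V → ℝ) {u v : V} (huv : u ≠ v) (f : ℝ) :
    ((cap '' {e ∈ G.edgeSet | f ≤ cap e}).Nonempty →
      D G cost cap u v f = D G cost cap u v (sInf (cap '' {e ∈ G.edgeSet | f ≤ cap e}))) ∧
    (cap '' {e ∈ G.edgeSet | f ≤ cap e} = ∅ → D G cost cap u v f = ⊤) :=
  D_eq_D_min_cap_general G cost cap huv f
end
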